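/- arXiv:1705.07308 — 2 statements merged into one kernel-verified Lean document; each statement's English description precedes it below -/
import Mathlib

section
/- There exist positive constants C, C′ and δ such that: for all t ∈ (−1, −1+δ), C/K(t) ≤ 𝔄(n(t), (1/√2, 1/√2)) ≤ C′/K(t), and for all t ∈ (1−δ, 1), C/K(t) ≤ 𝔄(n(t), (0,1)) ≤ C′/K(t). Here (1/√2,1/√2) and (0,1) are the outward unit normals to Γ_g at the endpoints P₁ = (−1,1) and P₂ = (1,0) respectively. -/
/-!
With `θ = arccos t` the slope of `Γ_g` is `g' = -θ / π`, so the normal `n(t)` is the unit vector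
at angle `arctan (θ / π)` from the vertical, while `g'' = 1 / (π sin θ)` gives the radius of
curvature `1 / K = π sin θ (1 + (θ / π)²)^{3/2}`. The endpoint normals sit at angles `0 = arctan 0`
and `π / 4 = arctan 1`, so near each cusp the angle in question is a difference of arctangents
of points of `[0, 1]`, where `arctan' ∈ [1/2, 1]`; it is therefore comparable to the distance `φ`
of `θ` from `0` resp. `π`. Since `sin θ = sin φ ≍ φ` on `[0, π/2]` and the last factor of `1 / K`
lies in `[1, 4]`, the radius of curvature is comparable to `φ` too.
-/

open Real Set

noncomputable def gfun (t : ℝ) : ℝ := (Real.sqrt (1 - t^2) - t * Real.arccos t) / Real.pi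

noncomputable def Kcurv (t : ℝ) : ℝ :=
  deriv (deriv gfun) t / (1 + (deriv gfun t)^2) ^ ((3:ℝ)/2)

noncomputable def enorm2 (x : ℝ × ℝ) : ℝ := Real.sqrt (x.1^2 + x.2^2)

/-- The angle in `[0, π]` between two (unit) vectors. -/
noncomputable def ang (u v : ℝ × ℝ) : ℝ :=
  Real.arccos ((u.1 * v.1 + u.2 * v.2) / (enorm2 u * enorm2 v))

noncomputable def normalVec (t : ℝ) : ℝ × ℝ :=
  (-(deriv gfun t) / Real.sqrt (1 + (deriv gfun t)^2), 1 / Real.sqrt (1 + (deriv gfun t)^2))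

lemma hasDerivAt_gfun {t : ℝ} (ht : t ∈ Ioo (-1) 1) :
    HasDerivAt gfun (-arccos t / π) t := by
  have hroot : √(1 - t ^ 2) ≠ 0 := (sqrt_pos.2 (by nlinarith [ht.1, ht.2])).ne'
  have hinner : HasDerivAt (fun x : ℝ ↦ 1 - x ^ 2) (-(2 * t)) t := by
    simpa using (hasDerivAt_pow 2 t).const_sub 1
  have hsqrt : HasDerivAt (fun x ↦ √(1 - x ^ 2)) (-(2 * t) / (2 * √(1 - t ^ 2))) t :=
    hinner.sqrt (by nlinarith [ht.1, ht.2])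
  have hmul : HasDerivAt (fun x ↦ x * arccos x) (1 * arccos t + t * -(1 / √(1 - t ^ 2))) t :=
    (hasDerivAt_id t).mul (hasDerivAt_arccos ht.1.ne' ht.2.ne)
  have h : HasDerivAt (fun x ↦ (√(1 - x ^ 2) - x * arccos x) / π)
      ((-(2 * t) / (2 * √(1 - t ^ 2)) - (1 * arccos t + t * -(1 / √(1 - t ^ 2)))) / π) t :=
    (hsqrt.sub hmul).div_const π
  exact h.congr_deriv (by field_simp; ring)

lemma deriv_gfun {t : ℝ} (ht : t ∈ Ioo (-1) 1) : deriv gfun t = -arccos t / π :=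
  (hasDerivAt_gfun ht).deriv

lemma deriv_deriv_gfun {t : ℝ} (ht : t ∈ Ioo (-1) 1) :
    deriv (deriv gfun) t = (π * sin (arccos t))⁻¹ := by
  have hloc : deriv gfun =ᶠ[nhds t] fun x ↦ -arccos x / π :=
    Filter.eventually_of_mem (Ioo_mem_nhds ht.1 ht.2) fun x hx ↦ deriv_gfun hx
  have h : HasDerivAt (fun x ↦ -arccos x / π) (-(-(1 / √(1 - t ^ 2))) / π) t :=
    (hasDerivAt_arccos ht.1.ne' ht.2.ne).neg.div_const π
  rw [hloc.deriv_eq, h.deriv, sin_arccos]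
  field_simp

lemma Kcurv_eq_inv {t : ℝ} (ht : t ∈ Ioo (-1) 1) :
    Kcurv t = (π * sin (arccos t) * (1 + (arccos t / π) ^ 2) ^ ((3 : ℝ) / 2))⁻¹ := by
  rw [Kcurv, deriv_deriv_gfun ht, deriv_gfun ht, neg_div, neg_sq, div_eq_mul_inv]
  ring

lemma one_le_one_add_sq_rpow_three_halves (a : ℝ) : 1 ≤ (1 + a ^ 2) ^ ((3 : ℝ) / 2) :=
  one_le_rpow (by nlinarith) (by norm_num)

lemma one_add_sq_rpow_three_halves_le_four {a : ℝ} (ha : a ^ 2 ≤ 1) :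
    (1 + a ^ 2) ^ ((3 : ℝ) / 2) ≤ 4 :=
  calc (1 + a ^ 2) ^ ((3 : ℝ) / 2) ≤ (1 + a ^ 2) ^ (2 : ℝ) :=
        rpow_le_rpow_of_exponent_le (by nlinarith) (by norm_num)
    _ ≤ 4 := by rw [rpow_two]; nlinarith

lemma ang_sin_cos {α β : ℝ} (h : |α - β| ≤ π) :
    ang (sin α, cos α) (sin β, cos β) = |α - β| := by
  simp only [ang, enorm2, sin_sq_add_cos_sq, sqrt_one, mul_one, div_one]
  rw [add_comm, ← cos_sub, ← cos_abs, arccos_cos (abs_nonneg _) h]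

lemma normalVec_eq_sin_cos_arctan (t : ℝ) :
    normalVec t = (sin (arctan (-deriv gfun t)), cos (arctan (-deriv gfun t))) := by
  rw [normalVec, sin_arctan, cos_arctan, neg_sq, neg_div]

lemma ang_normalVec {t β : ℝ} (ht : t ∈ Ioo (-1) 1) (hβ : β ∈ Icc 0 (π / 2)) :
    ang (normalVec t) (sin β, cos β) = |arctan (arccos t / π) - β| := by
  rw [normalVec_eq_sin_cos_arctan, deriv_gfun ht, neg_div, neg_neg]
  refine ang_sin_cos (abs_le.2 ⟨?_, ?_⟩)
  · linarith [neg_pi_div_two_lt_arctan (arccos t / π), hβ.2]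
  · linarith [arctan_lt_pi_div_two (arccos t / π), hβ.1, pi_pos]

lemma exists_arctan_sub_arctan_eq {x y : ℝ} (hxy : x < y) :
    ∃ c ∈ Ioo x y, arctan y - arctan x = (y - x) / (1 + c ^ 2) := by
  obtain ⟨c, hc, hslope⟩ := exists_hasDerivAt_eq_slope arctan (fun c ↦ 1 / (1 + c ^ 2)) hxy
    continuous_arctan.continuousOn fun c _ ↦ hasDerivAt_arctan c
  refine ⟨c, hc, ?_⟩
  rw [eq_div_iff (sub_pos.2 hxy).ne'] at hslope
  rw [← hslope]
  ring

lemma arctan_sub_arctan_le {x y : ℝ} (hxy : x ≤ y) : arctan y - arctan x ≤ y - x := by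
  rcases hxy.eq_or_lt with rfl | hlt
  · simp
  obtain ⟨c, -, hc⟩ := exists_arctan_sub_arctan_eq hlt
  rw [hc]
  exact div_le_self (sub_nonneg.2 hxy) (by nlinarith)

lemma half_sub_le_arctan_sub_arctan {x y : ℝ} (hx : -1 ≤ x) (hxy : x ≤ y) (hy : y ≤ 1) :
    (y - x) / 2 ≤ arctan y - arctan x := by
  rcases hxy.eq_or_lt with rfl | hlt
  · simp
  obtain ⟨c, hc, hsub⟩ := exists_arctan_sub_arctan_eq hlt
  rw [hsub]
  have hc2 : c ^ 2 ≤ 1 := by nlinarith [hc.1, hc.2]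
  exact div_le_div_of_nonneg_left (sub_nonneg.2 hxy) (by positivity) (by linarith)

lemma comparable_pi_mul_sin_mul {φ α P : ℝ} (hφ : φ ∈ Icc 0 (π / 2))
    (hα : φ / π / 2 ≤ α ∧ α ≤ φ / π) (hP : 1 ≤ P ∧ P ≤ 4) :
    1 / 80 * (π * sin φ * P) ≤ α ∧ α ≤ 1 * (π * sin φ * P) := by
  have hπ₀ := pi_pos
  have hsin_nonneg : 0 ≤ sin φ := sin_nonneg_of_nonneg_of_le_pi hφ.1 (by linarith [hφ.2])
  constructor
  · have hπ_sq : π ^ 2 ≤ 10 := by nlinarith [pi_lt_d2]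
    calc 1 / 80 * (π * sin φ * P) ≤ 1 / 80 * (π * φ * 4) := by
          gcongr 1 / 80 * ?_
          exact mul_le_mul (by gcongr; exact sin_le hφ.1) hP.2 (by linarith [hP.1])
            (by nlinarith [hφ.1])
      _ ≤ φ / π / 2 := by
          rw [le_div_iff₀ two_pos, div_mul_eq_mul_div, le_div_iff₀ hπ₀]
          nlinarith [hφ.1]
      _ ≤ α := hα.1
  · calc α ≤ φ / π := hα.2
      _ ≤ π * (2 / π * φ) := by
          rw [div_le_iff₀ hπ₀]
          field_simp
          nlinarith [hφ.1, pi_gt_three]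
      _ ≤ π * sin φ := by gcongr; exact mul_le_sin hφ.1 hφ.2
      _ ≤ 1 * (π * sin φ * P) := by
          rw [one_mul]
          exact le_mul_of_one_le_right (by positivity) hP.1

lemma arccos_div_pi_mem_Icc (t : ℝ) : arccos t / π ∈ Icc 0 1 :=
  ⟨div_nonneg (arccos_nonneg t) pi_pos.le, (div_le_one pi_pos).2 (arccos_le_pi t)⟩

lemma comparable_near_right_cusp {t : ℝ} (h0 : 0 < t) (h1 : t < 1) :
    1 / 80 / Kcurv t ≤ ang (normalVec t) ((0 : ℝ), (1 : ℝ)) ∧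
      ang (normalVec t) ((0 : ℝ), (1 : ℝ)) ≤ 1 / Kcurv t := by
  have ht : t ∈ Ioo (-1) 1 := ⟨by linarith, h1⟩
  have hθ : arccos t ∈ Icc 0 (π / 2) := ⟨arccos_nonneg t, arccos_le_pi_div_two.2 h0.le⟩
  have ha := arccos_div_pi_mem_Icc t
  have hang : ang (normalVec t) ((0 : ℝ), (1 : ℝ)) = arctan (arccos t / π) - arctan 0 := by
    have h := ang_normalVec ht (β := 0) ⟨le_rfl, pi_div_two_pos.le⟩
    rw [sin_zero, cos_zero, sub_zero, abs_of_nonneg (arctan_nonneg.2 ha.1)] at h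
    rw [h, arctan_zero, sub_zero]
  rw [hang, Kcurv_eq_inv ht, div_inv_eq_mul, div_inv_eq_mul]
  refine comparable_pi_mul_sin_mul hθ ⟨?_, ?_⟩ ⟨one_le_one_add_sq_rpow_three_halves _, ?_⟩
  · simpa using half_sub_le_arctan_sub_arctan (by norm_num) ha.1 ha.2
  · simpa using arctan_sub_arctan_le ha.1
  · exact one_add_sq_rpow_three_halves_le_four (by nlinarith [ha.1, ha.2])

lemma comparable_near_left_cusp {t : ℝ} (h1 : -1 < t) (h0 : t < 0) :
    1 / 80 / Kcurv t ≤ ang (normalVec t) (1 / √2, 1 / √2) ∧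
      ang (normalVec t) (1 / √2, 1 / √2) ≤ 1 / Kcurv t := by
  have ht : t ∈ Ioo (-1) 1 := ⟨h1, by linarith⟩
  have hφ : arccos (-t) ∈ Icc 0 (π / 2) := ⟨arccos_nonneg _, arccos_le_pi_div_two.2 (by linarith)⟩
  have ha := arccos_div_pi_mem_Icc t
  have hφa : arccos (-t) / π = 1 - arccos t / π := by
    rw [arccos_neg]
    field_simp
  have hdiag : (1 / √2, 1 / √2) = (sin (π / 4), cos (π / 4)) := by
    rw [sin_pi_div_four, cos_pi_div_four, sqrt_div_self']
  have hang : ang (normalVec t) (1 / √2, 1 / √2) = arctan 1 - arctan (arccos t / π) := by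
    rw [hdiag, ang_normalVec ht ⟨by positivity, by linarith [pi_pos]⟩, arctan_one, abs_sub_comm,
      abs_of_nonneg]
    rw [sub_nonneg, ← arctan_one, arctan_le_arctan_iff]
    exact ha.2
  have hsin : sin (arccos t) = sin (arccos (-t)) := by rw [sin_arccos, sin_arccos, neg_sq]
  rw [hang, Kcurv_eq_inv ht, div_inv_eq_mul, div_inv_eq_mul, hsin]
  refine comparable_pi_mul_sin_mul hφ ⟨?_, ?_⟩ ⟨one_le_one_add_sq_rpow_three_halves _, ?_⟩
  · rw [hφa]
    exact half_sub_le_arctan_sub_arctan (by linarith [ha.1]) ha.2 le_rfl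
  · rw [hφa]
    exact arctan_sub_arctan_le ha.2
  · exact one_add_sq_rpow_three_halves_le_four (by nlinarith [ha.1, ha.2])

theorem angle_comparable_to_inverse_curvature_near_cusps :
    ∃ C C' δ : ℝ, 0 < C ∧ 0 < C' ∧ 0 < δ ∧
      (∀ t : ℝ, -1 < t → t < -1 + δ →
        C / Kcurv t ≤ ang (normalVec t) (1 / Real.sqrt 2, 1 / Real.sqrt 2) ∧
        ang (normalVec t) (1 / Real.sqrt 2, 1 / Real.sqrt 2) ≤ C' / Kcurv t) ∧
      (∀ t : ℝ, 1 - δ < t → t < 1 →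
        C / Kcurv t ≤ ang (normalVec t) ((0:ℝ), (1:ℝ)) ∧
        ang (normalVec t) ((0:ℝ), (1:ℝ)) ≤ C' / Kcurv t) :=
  ⟨1 / 80, 1, 1, by norm_num, one_pos, one_pos,
    fun _ h1 h2 ↦ comparable_near_left_cusp h1 (by linarith),
    fun _ h1 h2 ↦ comparable_near_right_cusp (by linarith) h2⟩
end

section
/- Let k ≥ 2, let Ω ⊂ ℝ^d be open, let f : Ω → ℝ^d be a C^k mapping, let a ∈ Ω and b = f(a). Assume |det(∇f(a))| ≥ c and that |D^ν f_i(x)| ≤ C for all x ∈ Ω, all multi-indices ν with |ν| ≤ 2, and all 1 ≤ i ≤ d. Let r₀ ≤ sup{r > 0 : B(a,r) ⊂ Ω}, and set r₁ = min( c/(2 d² d! C^d), r₀ ) and r₂ = (c/(4 d! C^{d−1})) r₁. Then f is injective on B(a, r₁), the image f(B(a, r₁)) is an open set containing B(b, r₂), and the inverse mapping f^{−1} : f(B(a,r₁)) → B(a,r₁) is C^k. -/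
/-!
Let `A = Df(a)`. By Cramer's rule the entries of `A⁻¹` are at most `(d-1)! C^(d-1) / c`, so
`‖A⁻¹‖ ≤ N := d! C^(d-1) / c`, while the bound on second derivatives and the mean value inequality
give `‖Df(x) - A‖ ≤ d² C r₁ ≤ 1 / (2N)` on `B(a, r₁)`. Thus `f` is a small Lipschitz perturbation of
the invertible map `A` on the ball: it is injective and open there, the image of `B(a, r₁/2)`
contains `B(b, r₁/(4N)) = B(b, r₂)`, and `Df(x)` stays invertible, so the local inverse function
theorem makes the inverse `C^k`.
-/

open Real Set Metric

theorem Metric.ball_subset_of_le_sSup {X : Type*} [PseudoMetricSpace X] {Ω : Set X} {a : X}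
    {r : ℝ} (hr : 0 < r) (h : r ≤ sSup {ρ | 0 < ρ ∧ ball a ρ ⊆ Ω}) : ball a r ⊆ Ω := by
  intro x hx
  have hS : {ρ | 0 < ρ ∧ ball a ρ ⊆ Ω}.Nonempty := by
    by_contra hS
    rw [not_nonempty_iff_eq_empty.1 hS, Real.sSup_empty] at h
    linarith
  obtain ⟨ρ, ⟨-, hρ⟩, hxρ⟩ := exists_lt_of_lt_csSup hS ((mem_ball.1 hx).trans_le h)
  exact hρ (mem_ball.2 hxρ)

section Banach

variable {𝕜 E F : Type*} [NontriviallyNormedField 𝕜]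
  [NormedAddCommGroup E] [NormedSpace 𝕜 E] [NormedAddCommGroup F] [NormedSpace 𝕜 F]

theorem ContinuousLinearEquiv.isInvertible_of_norm_sub_lt [CompleteSpace E] (A : E ≃L[𝕜] F)
    {B : E →L[𝕜] F} (h : ‖(A.symm : F →L[𝕜] E)‖ * ‖B - A‖ < 1) : B.IsInvertible := by
  have hsmall : ‖(A.symm : F →L[𝕜] E) ∘L ((A : E →L[𝕜] F) - B)‖ < 1 :=
    (ContinuousLinearMap.opNorm_comp_le _ _).trans_lt (by rwa [norm_sub_rev])
  have hB : B = (A : E →L[𝕜] F) ∘L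
      ((1 : E →L[𝕜] E) - (A.symm : F →L[𝕜] E) ∘L ((A : E →L[𝕜] F) - B)) := by
    ext x
    simp
  rw [hB, ContinuousLinearMap.isInvertible_equiv_comp]
  exact ⟨.ofUnit (Units.oneSub _ hsmall), rfl⟩

theorem OpenPartialHomeomorph.contDiffOn_symm [CompleteSpace E] {n : WithTop ℕ∞}
    (e : OpenPartialHomeomorph E F)
    (he' : ∀ x ∈ e.source, ∃ e' : E ≃L[𝕜] F, HasFDerivAt e (e' : E →L[𝕜] F) x)
    (he : ContDiffOn 𝕜 n e e.source) : ContDiffOn 𝕜 n e.symm e.target := by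
  intro y hy
  obtain ⟨e', he'⟩ := he' _ (e.map_target hy)
  exact (e.contDiffAt_symm hy he'
    (he.contDiffAt (e.open_source.mem_nhds (e.map_target hy)))).contDiffWithinAt

end Banach

theorem ApproximatesLinearOn.of_norm_fderiv_sub_le {E F : Type*} [NormedAddCommGroup E]
    [NormedSpace ℝ E] [NormedAddCommGroup F] [NormedSpace ℝ F] {f : E → F} {A : E →L[ℝ] F}
    {s : Set E} {ε : NNReal} (hs : Convex ℝ s) (hf : ∀ x ∈ s, DifferentiableAt ℝ f x)
    (hA : ∀ x ∈ s, ‖fderiv ℝ f x - A‖ ≤ ε) :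
    ApproximatesLinearOn f A s ε := fun _ hx _ hy =>
  hs.norm_image_sub_le_of_norm_fderiv_le' hf hA hy hx

section Euclidean

variable {ι κ : Type*} [Fintype ι] [Fintype κ]

theorem EuclideanSpace.norm_le_sqrt_card_mul {x : EuclideanSpace ℝ ι} {m : ℝ} (hm : 0 ≤ m)
    (h : ∀ i, |x i| ≤ m) : ‖x‖ ≤ √(Fintype.card ι) * m := by
  rw [EuclideanSpace.norm_eq, ← Real.sqrt_sq hm, ← Real.sqrt_mul (Nat.cast_nonneg _)]
  refine Real.sqrt_le_sqrt ?_
  calc ∑ i, ‖x i‖ ^ 2 ≤ ∑ _i : ι, m ^ 2 := by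
        gcongr with i; rw [Real.norm_eq_abs]; exact h i
    _ = _ := by simp

variable [DecidableEq ι]

theorem EuclideanSpace.norm_le_of_abs_apply_single_le (T : EuclideanSpace ℝ ι →L[ℝ] ℝ) {m : ℝ}
    (hm : 0 ≤ m) (h : ∀ j, |T (EuclideanSpace.single j 1)| ≤ m) :
    ‖T‖ ≤ √(Fintype.card ι) * m := by
  set w : EuclideanSpace ℝ ι := WithLp.toLp 2 fun j => T (EuclideanSpace.single j 1)
  have hT : ∀ x, T x = inner ℝ w x := by
    intro x
    conv_lhs => rw [← (EuclideanSpace.basisFun ι ℝ).sum_repr x]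
    simp [w, PiLp.inner_apply]
  refine T.opNorm_le_bound (by positivity) fun x => ?_
  rw [hT]
  exact (norm_inner_le_norm w x).trans (by gcongr; exact norm_le_sqrt_card_mul hm h)

theorem EuclideanSpace.norm_le_of_abs_apply_single_apply_le
    (T : EuclideanSpace ℝ ι →L[ℝ] EuclideanSpace ℝ κ) {m : ℝ} (hm : 0 ≤ m)
    (h : ∀ i j, |T (EuclideanSpace.single j 1) i| ≤ m) :
    ‖T‖ ≤ √(Fintype.card κ) * (√(Fintype.card ι) * m) := by
  refine T.opNorm_le_bound (by positivity) fun x => ?_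
  have hcoord : ∀ i, |T x i| ≤ √(Fintype.card ι) * m * ‖x‖ := fun i =>
    ((PiLp.proj 2 (fun _ : κ => ℝ) i) ∘L T).le_of_opNorm_le
      (norm_le_of_abs_apply_single_le _ hm (h i)) x
  rw [mul_assoc]
  exact norm_le_sqrt_card_mul (by positivity) hcoord

theorem Matrix.norm_toEuclideanCLM_le {P : Matrix ι ι ℝ} {m : ℝ} (hm : 0 ≤ m)
    (h : ∀ i j, |P i j| ≤ m) : ‖toEuclideanCLM (𝕜 := ℝ) P‖ ≤ Fintype.card ι * m := by
  have := EuclideanSpace.norm_le_of_abs_apply_single_apply_le (toEuclideanCLM (𝕜 := ℝ) P) hm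
    fun i j => by simpa using h i j
  rwa [← mul_assoc, Real.mul_self_sqrt (Nat.cast_nonneg _)] at this

theorem Matrix.exists_continuousLinearEquiv_toEuclideanCLM {M : Matrix ι ι ℝ}
    (hM : IsUnit M.det) : ∃ A : EuclideanSpace ℝ ι ≃L[ℝ] EuclideanSpace ℝ ι,
      (A : _ →L[ℝ] _) = toEuclideanCLM (𝕜 := ℝ) M ∧
      (A.symm : _ →L[ℝ] _) = toEuclideanCLM (𝕜 := ℝ) M⁻¹ := by
  have h₁ : toEuclideanCLM (𝕜 := ℝ) M ∘L toEuclideanCLM (𝕜 := ℝ) M⁻¹ = .id ℝ _ := by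
    rw [← ContinuousLinearMap.mul_def, ← map_mul, M.mul_nonsing_inv hM, map_one]; rfl
  have h₂ : toEuclideanCLM (𝕜 := ℝ) M⁻¹ ∘L toEuclideanCLM (𝕜 := ℝ) M = .id ℝ _ := by
    rw [← ContinuousLinearMap.mul_def, ← map_mul, M.nonsing_inv_mul hM, map_one]; rfl
  exact ⟨.equivOfInverse' _ _ h₁ h₂, rfl, rfl⟩

theorem fderiv_euclidean_apply {E : Type*} [NormedAddCommGroup E] [NormedSpace ℝ E]
    {f : E → EuclideanSpace ℝ κ} {x : E} (hf : DifferentiableAt ℝ f x) (i : κ) (v : E) :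
    fderiv ℝ (fun y => f y i) x v = fderiv ℝ f x v i := by
  have : HasFDerivAt (fun y => f y i) (PiLp.proj 2 (fun _ : κ => ℝ) i ∘L fderiv ℝ f x) x :=
    (PiLp.hasFDerivAt_apply (𝕜 := ℝ) 2 (f x) i).comp x hf.hasFDerivAt
  rw [this.fderiv]
  rfl

theorem fderiv_eq_toEuclideanCLM {f : EuclideanSpace ℝ ι → EuclideanSpace ℝ ι}
    {x : EuclideanSpace ℝ ι} (hf : DifferentiableAt ℝ f x) :
    fderiv ℝ f x = Matrix.toEuclideanCLM (𝕜 := ℝ)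
      (Matrix.of fun i j => fderiv ℝ (fun y => f y i) x (EuclideanSpace.single j 1)) := by
  ext v i
  conv_lhs => rw [← (EuclideanSpace.basisFun ι ℝ).sum_repr v]
  simp [fderiv_euclidean_apply hf, Matrix.mulVec, dotProduct, mul_comm]

theorem norm_fderiv_sub_fderiv_le {f : EuclideanSpace ℝ ι → EuclideanSpace ℝ κ}
    {s : Set (EuclideanSpace ℝ ι)} (hs : IsOpen s) (hconv : Convex ℝ s) (hf : ContDiffOn ℝ 2 f s)
    {C : ℝ} (hC : 0 ≤ C)
    (hD2 : ∀ x ∈ s, ∀ i j l, |fderiv ℝ (fun y => fderiv ℝ (fun z => f z i) y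
      (EuclideanSpace.single j 1)) x (EuclideanSpace.single l 1)| ≤ C)
    {x y : EuclideanSpace ℝ ι} (hx : x ∈ s) (hy : y ∈ s) :
    ‖fderiv ℝ f x - fderiv ℝ f y‖ ≤
      √(Fintype.card κ) * (√(Fintype.card ι) * (√(Fintype.card ι) * C * ‖x - y‖)) := by
  have hdiff : ∀ z ∈ s, DifferentiableAt ℝ f z := fun z hz =>
    (hf.differentiableOn two_ne_zero).differentiableAt (hs.mem_nhds hz)
  have hdiff' : ∀ z ∈ s, DifferentiableAt ℝ (fderiv ℝ f) z := fun z hz =>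
    ((hf.fderiv_of_isOpen hs le_rfl).differentiableOn one_ne_zero).differentiableAt
      (hs.mem_nhds hz)
  have hpartial : ∀ i j, ∀ z ∈ s, DifferentiableAt ℝ
      (fun w => fderiv ℝ (fun w' => f w' i) w (EuclideanSpace.single j 1)) z := by
    intro i j z hz
    have : DifferentiableAt ℝ (fun w => fderiv ℝ f w (EuclideanSpace.single j 1) i) z :=
      (differentiableAt_euclidean.1 ((hdiff' z hz).clm_apply (differentiableAt_const _))) i
    refine this.congr_of_eventuallyEq ?_
    filter_upwards [hs.mem_nhds hz] with w hw using fderiv_euclidean_apply (hdiff w hw) i _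
  refine EuclideanSpace.norm_le_of_abs_apply_single_apply_le _ (by positivity) fun i j => ?_
  rw [sub_apply, PiLp.sub_apply, ← fderiv_euclidean_apply (hdiff x hx),
    ← fderiv_euclidean_apply (hdiff y hy)]
  exact hconv.norm_image_sub_le_of_norm_fderiv_le (hpartial i j)
    (fun z hz => EuclideanSpace.norm_le_of_abs_apply_single_le _ hC (hD2 z hz i j)) hy hx

theorem norm_fderiv_sub_fderiv_center_le {d : ℕ}
    {f : EuclideanSpace ℝ (Fin d) → EuclideanSpace ℝ (Fin d)} {a x : EuclideanSpace ℝ (Fin d)}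
    {r C : ℝ} (hf : ContDiffOn ℝ 2 f (ball a r)) (hC : 0 ≤ C)
    (hD2 : ∀ y ∈ ball a r, ∀ i j l : Fin d, |fderiv ℝ (fun y => fderiv ℝ (fun z => f z i) y
      (EuclideanSpace.single j 1)) y (EuclideanSpace.single l 1)| ≤ C)
    (hx : x ∈ ball a r) : ‖fderiv ℝ f x - fderiv ℝ f a‖ ≤ d ^ 2 * C * r := by
  refine (norm_fderiv_sub_fderiv_le isOpen_ball (convex_ball a r) hf hC hD2 hx
    (mem_ball_self (nonempty_ball.1 ⟨x, hx⟩))).trans ?_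
  have hsqrt : √(d : ℝ) ≤ d := by simp; omega
  have hxa : ‖x - a‖ ≤ r := (mem_ball_iff_norm.1 hx).le
  rw [Fintype.card_fin, ← mul_assoc, Real.mul_self_sqrt (Nat.cast_nonneg _)]
  calc d * (√d * C * ‖x - a‖) ≤ d * (d * C * r) := by gcongr
    _ = d ^ 2 * C * r := by ring

theorem Matrix.abs_adjugate_apply_le {n : ℕ} {M : Matrix (Fin n) (Fin n) ℝ} {C : ℝ}
    (hM : ∀ i j, |M i j| ≤ C) (i j : Fin n) :
    |M.adjugate i j| ≤ (n - 1).factorial * C ^ (n - 1) := by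
  cases n with
  | zero => exact i.elim0
  | succ n =>
    rw [adjugate_fin_succ_eq_det_submatrix, abs_mul, abs_pow, abs_neg, abs_one, one_pow, one_mul]
    simpa [nsmul_eq_mul] using det_le (A := M.submatrix j.succAbove i.succAbove)
      (abv := AbsoluteValue.abs) fun k l => hM _ _

theorem Matrix.abs_inv_apply_le {n : ℕ} {M : Matrix (Fin n) (Fin n) ℝ} {c C : ℝ} (hc : 0 < c)
    (hdet : c ≤ |M.det|) (hM : ∀ i j, |M i j| ≤ C) (i j : Fin n) :
    |M⁻¹ i j| ≤ (n - 1).factorial * C ^ (n - 1) / c := by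
  rw [inv_def, Ring.inverse_eq_inv, smul_apply, smul_eq_mul, abs_mul, abs_inv, inv_mul_eq_div]
  exact div_le_div₀ ((abs_nonneg _).trans (abs_adjugate_apply_le hM i j))
    (abs_adjugate_apply_le hM i j) hc hdet

theorem Matrix.norm_toEuclideanCLM_inv_le {n : ℕ} {M : Matrix (Fin n) (Fin n) ℝ} {c C : ℝ}
    (hc : 0 < c) (hC : 0 ≤ C) (hdet : c ≤ |M.det|) (hM : ∀ i j, |M i j| ≤ C) :
    ‖toEuclideanCLM (𝕜 := ℝ) M⁻¹‖ ≤ n.factorial * C ^ (n - 1) / c := by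
  refine (norm_toEuclideanCLM_le (by positivity) (abs_inv_apply_le hc hdet hM)).trans ?_
  rw [Fintype.card_fin, mul_div_assoc', ← mul_assoc]
  gcongr
  rcases n with _ | n
  · simp
  · simp [Nat.factorial_succ]

theorem exists_continuousLinearEquiv_eq_fderiv_norm_symm_le {d : ℕ}
    {f : EuclideanSpace ℝ (Fin d) → EuclideanSpace ℝ (Fin d)} {a : EuclideanSpace ℝ (Fin d)}
    (hf : DifferentiableAt ℝ f a) {c C : ℝ} (hc : 0 < c) (hC : 0 ≤ C)
    (hdet : c ≤ |(Matrix.of fun i j : Fin d =>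
        fderiv ℝ (fun x => f x i) a (EuclideanSpace.single j 1)).det|)
    (hD1 : ∀ i j : Fin d, |fderiv ℝ (fun y => f y i) a (EuclideanSpace.single j 1)| ≤ C) :
    ∃ A : EuclideanSpace ℝ (Fin d) ≃L[ℝ] EuclideanSpace ℝ (Fin d),
      (A : EuclideanSpace ℝ (Fin d) →L[ℝ] EuclideanSpace ℝ (Fin d)) = fderiv ℝ f a ∧
      ‖(A.symm : EuclideanSpace ℝ (Fin d) →L[ℝ] EuclideanSpace ℝ (Fin d))‖ ≤
        d.factorial * C ^ (d - 1) / c := by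
  have hunit : IsUnit (Matrix.of fun i j : Fin d =>
      fderiv ℝ (fun x => f x i) a (EuclideanSpace.single j 1)).det :=
    isUnit_iff_ne_zero.2 (abs_pos.1 (hc.trans_le hdet))
  obtain ⟨A, hA, hAsymm⟩ := Matrix.exists_continuousLinearEquiv_toEuclideanCLM hunit
  refine ⟨A, hA.trans (fderiv_eq_toEuclideanCLM hf).symm, ?_⟩
  rw [hAsymm]
  exact Matrix.norm_toEuclideanCLM_inv_le hc hC hdet hD1

end Euclidean

section InverseFunction

variable {E F : Type*} [NormedAddCommGroup E] [NormedSpace ℝ E] [CompleteSpace E] [Nontrivial E]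
  [NormedAddCommGroup F] [NormedSpace ℝ F]

theorem quantitative_inverse_of_norm_fderiv_sub_le {n : WithTop ℕ∞} (hn : n ≠ 0) {f : E → F}
    {a : E} {r ε N : ℝ} (hr : 0 < r) (hf : ContDiffOn ℝ n f (ball a r)) (A : E ≃L[ℝ] F)
    (hA : ∀ x ∈ ball a r, ‖fderiv ℝ f x - A‖ ≤ ε) (hN : ‖(A.symm : F →L[ℝ] E)‖ ≤ N)
    (hε : 2 * N * ε ≤ 1) :
    InjOn f (ball a r) ∧ IsOpen (f '' ball a r) ∧ ball (f a) (r / (4 * N)) ⊆ f '' ball a r ∧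
      ∃ g : F → E, (∀ x ∈ ball a r, g (f x) = x) ∧ (∀ y ∈ f '' ball a r, f (g y) = y) ∧
        ContDiffOn ℝ n g (f '' ball a r) := by
  set N' := ‖(A.symm : F →L[ℝ] E)‖
  have hε₀ : 0 ≤ ε := (norm_nonneg _).trans (hA a (mem_ball_self hr))
  have hN' : 0 < N' := A.norm_symm_pos
  have hN'ε : N' * ε ≤ 1 / 2 := by nlinarith
  have hεN' : ε ≤ N'⁻¹ / 2 := by
    rw [inv_eq_one_div, div_div, le_div_iff₀ (by positivity)]
    linarith
  have hdiff : ∀ x ∈ ball a r, DifferentiableAt ℝ f x := fun x hx =>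
    (hf.differentiableOn hn).differentiableAt (isOpen_ball.mem_nhds hx)
  have happrox : ApproximatesLinearOn f (A : E →L[ℝ] F) (ball a r) ε.toNNReal :=
    .of_norm_fderiv_sub_le (convex_ball a r) hdiff (by simpa [hε₀] using hA)
  have hlt : ε.toNNReal < ‖(A.symm : F →L[ℝ] E)‖₊⁻¹ := by
    rw [← NNReal.coe_lt_coe, NNReal.coe_inv, coe_nnnorm, Real.coe_toNNReal _ hε₀]
    linarith [inv_pos.2 hN']
  have hc : Subsingleton E ∨ _ := .inr hlt
  set e := happrox.toOpenPartialHomeomorph f (ball a r) hc isOpen_ball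
  refine ⟨happrox.injOn hc, e.open_target, ?_, e.symm, fun x hx => e.left_inv hx,
    fun y hy => e.right_inv hy, e.contDiffOn_symm (fun x hx => ?_) hf⟩
  · have hsub := happrox.closedBall_subset_target hc isOpen_ball (b := a) (by positivity)
      (closedBall_subset_ball (half_lt_self hr))
    refine ball_subset_closedBall.trans ((closedBall_subset_closedBall ?_).trans hsub)
    rw [NNReal.coe_inv, coe_nnnorm, Real.coe_toNNReal _ hε₀]
    calc r / (4 * N) = N⁻¹ / 2 * (r / 2) := by ring
      _ ≤ N'⁻¹ / 2 * (r / 2) := by gcongr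
      _ ≤ (N'⁻¹ - ε) * (r / 2) := by gcongr; linarith
  · obtain ⟨B, hB⟩ := A.isInvertible_of_norm_sub_lt (B := fderiv ℝ f x) (by nlinarith [hA x hx])
    exact ⟨B, hB ▸ (hdiff x hx).hasFDerivAt⟩

end InverseFunction

theorem quantitative_inverse_function_theorem_general
    (d k : ℕ) (hk : 2 ≤ k)
    (Ω : Set (EuclideanSpace ℝ (Fin d)))
    (f : EuclideanSpace ℝ (Fin d) → EuclideanSpace ℝ (Fin d))
    (hf : ContDiffOn ℝ k f Ω)
    (a b : EuclideanSpace ℝ (Fin d)) (hb : b = f a)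
    (c C : ℝ) (hc : 0 < c) (hC : 0 < C)
    (hdet : c ≤ |(Matrix.of fun i j : Fin d =>
        fderiv ℝ (fun x => f x i) a (EuclideanSpace.single j 1)).det|)
    (hD1 : ∀ x ∈ Ω, ∀ i j : Fin d,
      |fderiv ℝ (fun y => f y i) x (EuclideanSpace.single j 1)| ≤ C)
    (hD2 : ∀ x ∈ Ω, ∀ i j l : Fin d,
      |fderiv ℝ (fun y => fderiv ℝ (fun z => f z i) y (EuclideanSpace.single j 1)) x
        (EuclideanSpace.single l 1)| ≤ C)
    (r₀ : ℝ) (hr₀ : r₀ ≤ sSup {r : ℝ | 0 < r ∧ Metric.ball a r ⊆ Ω})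
    (r₁ r₂ : ℝ)
    (hr₁ : r₁ = min (c / (2 * (d:ℝ)^2 * (d.factorial : ℝ) * C^d)) r₀)
    (hr₂ : r₂ = c / (4 * (d.factorial : ℝ) * C^(d-1)) * r₁) :
    Set.InjOn f (Metric.ball a r₁) ∧
    IsOpen (f '' Metric.ball a r₁) ∧
    Metric.ball b r₂ ⊆ f '' Metric.ball a r₁ ∧
    ∃ finv : EuclideanSpace ℝ (Fin d) → EuclideanSpace ℝ (Fin d),
      (∀ x ∈ Metric.ball a r₁, finv (f x) = x) ∧
      (∀ y ∈ f '' Metric.ball a r₁, f (finv y) = y) ∧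
      ContDiffOn ℝ k finv (f '' Metric.ball a r₁) := by
  rcases le_or_gt r₁ 0 with hr₁0 | hr₁0
  · have hr₂0 : r₂ ≤ 0 := hr₂ ▸ mul_nonpos_of_nonneg_of_nonpos (by positivity) hr₁0
    simp [ball_eq_empty.2 hr₁0, ball_eq_empty.2 hr₂0]
  have hd : d ≠ 0 := by
    rintro rfl
    simp at hr₁
    linarith [min_le_left 0 r₀]
  have : NeZero d := ⟨hd⟩
  have hball : ball a r₁ ⊆ Ω := ball_subset_of_le_sSup hr₁0 (hr₁ ▸ (min_le_right _ _).trans hr₀)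
  have hf₂ : ContDiffOn ℝ 2 f (ball a r₁) := (hf.of_le (by exact_mod_cast hk)).mono hball
  have ha : a ∈ ball a r₁ := mem_ball_self hr₁0
  obtain ⟨A, hA, hAsymm⟩ := exists_continuousLinearEquiv_eq_fderiv_norm_symm_le
    ((hf₂.differentiableOn two_ne_zero).differentiableAt (isOpen_ball.mem_nhds ha)) hc hC.le hdet
    (hD1 a (hball ha))
  have hderiv : ∀ x ∈ ball a r₁, ‖fderiv ℝ f x - A‖ ≤ d ^ 2 * C * r₁ := fun x hx => hA ▸
    norm_fderiv_sub_fderiv_center_le hf₂ hC.le (fun y hy => hD2 y (hball hy)) hx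
  have hNε : 2 * (d.factorial * C ^ (d - 1) / c) * (d ^ 2 * C * r₁) ≤ 1 := by
    calc 2 * (d.factorial * C ^ (d - 1) / c) * (d ^ 2 * C * r₁)
          = 2 * d ^ 2 * d.factorial * C ^ d / c * r₁ := by
            rw [← pow_sub_one_mul hd C]; field_simp
      _ ≤ 2 * d ^ 2 * d.factorial * C ^ d / c * (c / (2 * d ^ 2 * d.factorial * C ^ d)) := by
            gcongr; exact hr₁ ▸ min_le_left _ _
      _ = 1 := by field_simp
  obtain ⟨hinj, hopen, hsurj, hinv⟩ := quantitative_inverse_of_norm_fderiv_sub_le (n := k)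
    (by positivity) hr₁0 (hf.mono hball) A hderiv hAsymm hNε
  have hr₂' : r₂ = r₁ / (4 * (d.factorial * C ^ (d - 1) / c)) := by rw [hr₂]; field_simp
  rw [hb, hr₂']
  exact ⟨hinj, hopen, hsurj, hinv⟩

/-- A quantitative version of the inverse function theorem. -/
theorem quantitative_inverse_function_theorem
    (d k : ℕ) (hk : 2 ≤ k)
    (Ω : Set (EuclideanSpace ℝ (Fin d))) (hΩ : IsOpen Ω)
    (f : EuclideanSpace ℝ (Fin d) → EuclideanSpace ℝ (Fin d))
    (hf : ContDiffOn ℝ k f Ω)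
    (a b : EuclideanSpace ℝ (Fin d)) (ha : a ∈ Ω) (hb : b = f a)
    (c C : ℝ) (hc : 0 < c) (hC : 0 < C)
    (hdet : c ≤ |(Matrix.of fun i j : Fin d =>
        fderiv ℝ (fun x => f x i) a (EuclideanSpace.single j 1)).det|)
    (hD0 : ∀ x ∈ Ω, ∀ i : Fin d, |f x i| ≤ C)
    (hD1 : ∀ x ∈ Ω, ∀ i j : Fin d,
      |fderiv ℝ (fun y => f y i) x (EuclideanSpace.single j 1)| ≤ C)
    (hD2 : ∀ x ∈ Ω, ∀ i j l : Fin d,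
      |fderiv ℝ (fun y => fderiv ℝ (fun z => f z i) y (EuclideanSpace.single j 1)) x
        (EuclideanSpace.single l 1)| ≤ C)
    (r₀ : ℝ) (hr₀ : r₀ ≤ sSup {r : ℝ | 0 < r ∧ Metric.ball a r ⊆ Ω})
    (r₁ r₂ : ℝ)
    (hr₁ : r₁ = min (c / (2 * (d:ℝ)^2 * (d.factorial : ℝ) * C^d)) r₀)
    (hr₂ : r₂ = c / (4 * (d.factorial : ℝ) * C^(d-1)) * r₁) :
    Set.InjOn f (Metric.ball a r₁) ∧
    IsOpen (f '' Metric.ball a r₁) ∧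
    Metric.ball b r₂ ⊆ f '' Metric.ball a r₁ ∧
    ∃ finv : EuclideanSpace ℝ (Fin d) → EuclideanSpace ℝ (Fin d),
      (∀ x ∈ Metric.ball a r₁, finv (f x) = x) ∧
      (∀ y ∈ f '' Metric.ball a r₁, f (finv y) = y) ∧
      ContDiffOn ℝ k finv (f '' Metric.ball a r₁) :=
  quantitative_inverse_function_theorem_general d k hk Ω f hf a b hb c C hc hC hdet hD1 hD2 r₀ hr₀
    r₁ r₂ hr₁ hr₂
end
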